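/- Let f : X → X be a measurable map preserving a Borel probability measure μ on a compact metric space X, and let (φ_n) be a sub-additive sequence of continuous functions such that lim_{n→∞} φ_n(x)/n ≤ γ_1 for μ-a.e. x, where γ_1 < γ_2. Define H_ℓ(Φ, γ_2) = { x : (1/(nℓ))·Σ_{i=0}^{n−1} φ_ℓ(f^{iℓ} x) ≤ γ_2 for all n ∈ ℕ }. Then μ(H_ℓ(Φ, γ_2)) → 1 as ℓ → ∞. -/

import Mathlib

/-!
Apply the maximal ergodic inequality to `f^[ℓ]` and the observable `φ_ℓ / ℓ`: for
`γ₁ < γ < γ₂`, the set of points where some Birkhoff average of `φ_ℓ / ℓ` exceeds `γ₂` has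
measure at most `∫ (φ_ℓ / ℓ - γ)⁺ / (γ₂ - γ)`. Sub-additivity bounds `φ_ℓ / ℓ` above by
`sup φ₁`, and a.e. `φ_ℓ / ℓ < γ` for large `ℓ`, so this integral tends to `0` by dominated
convergence.
-/

open MeasureTheory Filter Topology

section BirkhoffMax

variable {X : Type*} {T : X → X} {g : X → ℝ}

noncomputable def birkhoffMax (T : X → X) (g : X → ℝ) (N : ℕ) (x : X) : ℝ :=
  (Finset.range (N + 1)).sup' Finset.nonempty_range_add_one fun n => birkhoffSum T g n x

lemma birkhoffSum_le_birkhoffMax {n N : ℕ} (h : n ≤ N) (x : X) :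
    birkhoffSum T g n x ≤ birkhoffMax T g N x :=
  Finset.le_sup' (fun n => birkhoffSum T g n x) (Finset.mem_range_succ_iff.2 h)

lemma birkhoffMax_nonneg (N : ℕ) (x : X) : 0 ≤ birkhoffMax T g N x := by
  simpa [birkhoffSum_zero] using birkhoffSum_le_birkhoffMax (T := T) (g := g) N.zero_le x

lemma monotone_birkhoffMax (x : X) : Monotone fun N => birkhoffMax T g N x := fun _ _ h =>
  Finset.sup'_mono _ (Finset.range_subset_range.2 (Nat.succ_le_succ h)) _

lemma exists_birkhoffSum_eq_birkhoffMax (N : ℕ) (x : X) :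
    ∃ n ≤ N, birkhoffSum T g n x = birkhoffMax T g N x := by
  obtain ⟨n, hn, h⟩ := Finset.exists_mem_eq_sup' Finset.nonempty_range_add_one
    fun n => birkhoffSum T g n x
  exact ⟨n, Finset.mem_range_succ_iff.1 hn, h.symm⟩

lemma birkhoffMax_le_add_birkhoffMax_apply {N : ℕ} {x : X} (h : 0 < birkhoffMax T g N x) :
    birkhoffMax T g N x ≤ g x + birkhoffMax T g N (T x) := by
  obtain ⟨n, hn, heq⟩ := exists_birkhoffSum_eq_birkhoffMax (T := T) (g := g) N x
  cases n with
  | zero => simp only [birkhoffSum_zero] at heq; linarith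
  | succ n =>
    rw [← heq, birkhoffSum_succ']
    gcongr
    exact birkhoffSum_le_birkhoffMax (by omega) _

lemma birkhoffMax_le_birkhoffSum_abs (N : ℕ) (x : X) :
    birkhoffMax T g N x ≤ birkhoffSum T (fun y => |g y|) N x := by
  refine Finset.sup'_le _ _ fun n hn => ?_
  calc birkhoffSum T g n x ≤ birkhoffSum T (fun y => |g y|) n x :=
        Finset.sum_le_sum fun k _ => le_abs_self _
    _ ≤ birkhoffSum T (fun y => |g y|) N x :=
        Finset.sum_le_sum_of_subset_of_nonneg
          (Finset.range_subset_range.2 (Finset.mem_range_succ_iff.1 hn)) fun k _ _ => abs_nonneg _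

lemma setOf_exists_birkhoffSum_pos_eq_iUnion :
    {x | ∃ n, 0 < birkhoffSum T g n x} = ⋃ N, {x | 0 < birkhoffMax T g N x} := by
  ext x
  simp only [Set.mem_ofPred_eq, Set.mem_iUnion]
  constructor
  · rintro ⟨n, hn⟩
    exact ⟨n, hn.trans_le (birkhoffSum_le_birkhoffMax le_rfl x)⟩
  · rintro ⟨N, hN⟩
    obtain ⟨n, -, heq⟩ := exists_birkhoffSum_eq_birkhoffMax (T := T) (g := g) N x
    exact ⟨n, heq ▸ hN⟩

end BirkhoffMax

section MaximalErgodic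

variable {X : Type*} [MeasurableSpace X] {μ : Measure X} {T : X → X} {g : X → ℝ}

lemma measurable_birkhoffSum (hT : Measurable T) (hg : Measurable g) (n : ℕ) :
    Measurable (birkhoffSum T g n) :=
  Finset.measurable_sum _ fun k _ => hg.comp (hT.iterate k)

lemma measurable_birkhoffMax (hT : Measurable T) (hg : Measurable g) (N : ℕ) :
    Measurable (birkhoffMax T g N) := by
  have h : birkhoffMax T g N =
      (Finset.range (N + 1)).sup' Finset.nonempty_range_add_one (birkhoffSum T g) :=
    funext fun x => (Finset.sup'_apply _ _ x).symm
  exact h ▸ Finset.measurable_sup' _ fun n _ => measurable_birkhoffSum hT hg n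

lemma MeasureTheory.MeasurePreserving.integrable_birkhoffMax (hT : MeasurePreserving T μ μ)
    (hg : Measurable g) (hgi : Integrable g μ) (N : ℕ) : Integrable (birkhoffMax T g N) μ := by
  have hsum : Integrable (birkhoffSum T (fun y => |g y|) N) μ :=
    integrable_finsetSum _ fun k _ => (hT.iterate k).integrable_comp_of_integrable hgi.abs
  refine hsum.mono' (measurable_birkhoffMax hT.measurable hg N).aestronglyMeasurable
    (ae_of_all _ fun x => ?_)
  rw [Real.norm_of_nonneg (birkhoffMax_nonneg N x)]
  exact birkhoffMax_le_birkhoffSum_abs N x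

lemma measurableSet_exists_birkhoffSum_pos (hT : Measurable T) (hg : Measurable g) :
    MeasurableSet {x | ∃ n, 0 < birkhoffSum T g n x} := by
  rw [setOf_exists_birkhoffSum_pos_eq_iUnion]
  exact MeasurableSet.iUnion fun N => measurableSet_lt measurable_const
    (measurable_birkhoffMax hT hg N)

/-- `M = birkhoffMax T g N` vanishes off `A = {0 < M}` and `M ∘ T ≥ 0`, so `M - M ∘ T`, of
integral `0`, is bounded by its restriction to `A`, where it is at most `g`. -/
lemma MeasureTheory.MeasurePreserving.setIntegral_birkhoffMax_pos_nonneg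
    (hT : MeasurePreserving T μ μ) (hg : Measurable g) (hgi : Integrable g μ) (N : ℕ) :
    0 ≤ ∫ x in {x | 0 < birkhoffMax T g N x}, g x ∂μ := by
  set M := birkhoffMax T g N
  set A := {x | 0 < M x}
  have hMm : Measurable M := measurable_birkhoffMax hT.measurable hg N
  have hA : MeasurableSet A := measurableSet_lt measurable_const hMm
  have hM : Integrable M μ := hT.integrable_birkhoffMax hg hgi N
  have hMT : Integrable (fun x => M (T x)) μ := hT.integrable_comp_of_integrable hM
  have hdiff := hM.sub hMT
  have hinv : ∫ x, M (T x) ∂μ = ∫ x, M x ∂μ := by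
    rw [← integral_map hT.aemeasurable hMm.aestronglyMeasurable, hT.map_eq]
  calc 0 = ∫ x, (M x - M (T x)) ∂μ := by
        rw [integral_sub hM hMT, hinv, sub_self]
    _ ≤ ∫ x, A.indicator (fun x => M x - M (T x)) x ∂μ := by
        refine integral_mono hdiff (hdiff.indicator hA) fun x => ?_
        by_cases hx : x ∈ A
        · simp [Set.indicator_of_mem hx]
        · have hMx : M x = 0 := le_antisymm (not_lt.1 hx) (birkhoffMax_nonneg N x)
          simp [Set.indicator_of_notMem hx, hMx, birkhoffMax_nonneg N (T x), M]
    _ = ∫ x in A, (M x - M (T x)) ∂μ := integral_indicator hA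
    _ ≤ ∫ x in A, g x ∂μ :=
        setIntegral_mono_on hdiff.integrableOn hgi.integrableOn hA fun x hx => by
          linarith [birkhoffMax_le_add_birkhoffMax_apply hx]

/-- Hopf's maximal ergodic theorem. -/
theorem MeasureTheory.MeasurePreserving.setIntegral_exists_birkhoffSum_pos_nonneg
    (hT : MeasurePreserving T μ μ) (hg : Measurable g) (hgi : Integrable g μ) :
    0 ≤ ∫ x in {x | ∃ n, 0 < birkhoffSum T g n x}, g x ∂μ := by
  rw [setOf_exists_birkhoffSum_pos_eq_iUnion]
  exact ge_of_tendsto' (tendsto_setIntegral_of_monotone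
    (fun N => measurableSet_lt measurable_const (measurable_birkhoffMax hT.measurable hg N))
    (fun _ _ h _ hx => hx.trans_le (monotone_birkhoffMax _ h)) hgi.integrableOn)
    (hT.setIntegral_birkhoffMax_pos_nonneg hg hgi)

/-- The maximal ergodic inequality. -/
theorem MeasureTheory.MeasurePreserving.mul_measureReal_exists_birkhoffSum_pos_le
    [IsFiniteMeasure μ] (hT : MeasurePreserving T μ μ) (hg : Measurable g)
    (hgi : Integrable g μ) (a b : ℝ) :
    (b - a) * μ.real {x | ∃ n, 0 < birkhoffSum T (fun y => g y - b) n x} ≤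
      ∫ x, max (g x - a) 0 ∂μ := by
  set B := {x | ∃ n, 0 < birkhoffSum T (fun y => g y - b) n x}
  have hB : MeasurableSet B :=
    measurableSet_exists_birkhoffSum_pos hT.measurable (hg.sub measurable_const)
  have hga : Integrable (fun x => g x - a) μ := hgi.sub (integrable_const a)
  have hpos : Integrable (fun x => max (g x - a) 0) μ := hga.sup (integrable_zero _ _ μ)
  have hopf : 0 ≤ ∫ x in B, (g x - b) ∂μ :=
    hT.setIntegral_exists_birkhoffSum_pos_nonneg (hg.sub measurable_const)
      (hgi.sub (integrable_const b))
  have hsplit : ∫ x in B, (g x - b) ∂μ = ∫ x in B, (g x - a) ∂μ - (b - a) * μ.real B := by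
    have : ∀ x, g x - b = (g x - a) - (b - a) := fun x => by ring
    simp only [this]
    rw [integral_sub hga.integrableOn (integrable_const _).integrableOn, setIntegral_const,
      smul_eq_mul, mul_comm]
  calc (b - a) * μ.real B ≤ ∫ x in B, (g x - a) ∂μ := by linarith
    _ ≤ ∫ x in B, max (g x - a) 0 ∂μ :=
        setIntegral_mono_on hga.integrableOn hpos.integrableOn hB fun x _ => le_max_left _ _
    _ ≤ ∫ x, max (g x - a) 0 ∂μ :=
        setIntegral_le_integral hpos (ae_of_all _ fun x => le_max_right _ _)

end MaximalErgodic

lemma apply_le_birkhoffSum_of_subadditive {X : Type*} {f : X → X} {φ : ℕ → X → ℝ}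
    (hsub : ∀ n m x, φ (n + m) x ≤ φ n x + φ m (f^[n] x)) {n : ℕ} (hn : 1 ≤ n) (x : X) :
    φ n x ≤ birkhoffSum f (φ 1) n x := by
  induction n, hn using Nat.le_induction with
  | base => rw [birkhoffSum_one]
  | succ n _ ih => linarith [hsub n 1 x, birkhoffSum_succ f (φ 1) n x]

lemma div_le_of_subadditive {X : Type*} {f : X → X} {φ : ℕ → X → ℝ}
    (hsub : ∀ n m x, φ (n + m) x ≤ φ n x + φ m (f^[n] x)) {C : ℝ} (hC : ∀ x, φ 1 x ≤ C)
    {n : ℕ} (hn : 1 ≤ n) (x : X) : φ n x / n ≤ C := by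
  have hn' : (0 : ℝ) < n := by exact_mod_cast hn
  rw [div_le_iff₀ hn']
  calc φ n x ≤ birkhoffSum f (φ 1) n x := apply_le_birkhoffSum_of_subadditive hsub hn x
    _ ≤ ∑ _k ∈ Finset.range n, C := Finset.sum_le_sum fun k _ => hC _
    _ = C * n := by simp [mul_comm]

lemma tendsto_integral_max_sub_zero_of_limsup_lt {X : Type*} [MeasurableSpace X]
    {μ : Measure X} [IsFiniteMeasure μ] {ψ : ℕ → X → ℝ} {C a : ℝ}
    (hψ : ∀ n, Measurable (ψ n)) (hC : ∀ᶠ n in atTop, ∀ x, ψ n x ≤ C)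
    (hlim : ∀ᵐ x ∂μ, limsup (fun n => ψ n x) atTop < a) :
    Tendsto (fun n => ∫ x, max (ψ n x - a) 0 ∂μ) atTop (𝓝 0) := by
  have := tendsto_integral_filter_of_dominated_convergence (μ := μ) (fun _ => max (C - a) 0)
    (F := fun n x => max (ψ n x - a) 0) (f := fun _ => 0)
    (Eventually.of_forall fun n =>
      (((hψ n).sub_const a).max measurable_const).aestronglyMeasurable)
    (hC.mono fun n hn => ae_of_all _ fun x => by
      rw [Real.norm_of_nonneg (le_max_right _ _)]
      exact max_le_max_right 0 (by linarith [hn x]))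
    (integrable_const _) ?_
  · simpa using this
  filter_upwards [hlim] with x hx
  have hbdd : IsBoundedUnder (· ≤ ·) atTop fun n => ψ n x :=
    isBoundedUnder_of_eventually_le (hC.mono fun n hn => hn x)
  refine tendsto_const_nhds.congr' ?_
  filter_upwards [eventually_lt_of_limsup_lt hx hbdd] with n hn
  exact (max_eq_right (by linarith)).symm

lemma setOf_forall_sum_div_le_eq_compl {X : Type*} {f : X → X} {ψ : X → ℝ} {ℓ : ℕ}
    (hℓ : 0 < ℓ) (γ : ℝ) :
    {x | ∀ n : ℕ, 1 ≤ n → (∑ i ∈ Finset.range n, ψ (f^[i * ℓ] x)) / (n * ℓ : ℝ) ≤ γ} =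
      {x | ∃ n, 0 < birkhoffSum (f^[ℓ]) (fun y => ψ y / ℓ - γ) n x}ᶜ := by
  have birkhoffSum_eq : ∀ n : ℕ, 1 ≤ n → ∀ x, birkhoffSum (f^[ℓ]) (fun y => ψ y / ℓ - γ) n x =
      n * ((∑ i ∈ Finset.range n, ψ (f^[i * ℓ] x)) / (n * ℓ : ℝ) - γ) := by
    intro n hn x
    simp only [birkhoffSum, Finset.sum_sub_distrib, ← Finset.sum_div, ← Function.iterate_mul,
      Finset.sum_const, Finset.card_range, nsmul_eq_mul, mul_comm ℓ]
    field_simp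
  ext x
  simp only [Set.mem_ofPred_eq, Set.mem_compl_iff, not_exists, not_lt]
  constructor
  · intro h n
    rcases Nat.eq_zero_or_pos n with rfl | hn
    · simp [birkhoffSum_zero]
    · rw [birkhoffSum_eq n hn]
      exact mul_nonpos_of_nonneg_of_nonpos (Nat.cast_nonneg n) (sub_nonpos.2 (h n hn))
  · intro h n hn
    have := h n
    rw [birkhoffSum_eq n hn] at this
    exact sub_nonpos.1 (nonpos_of_mul_nonpos_right this (by exact_mod_cast hn))

lemma tendsto_measure_compl_of_tendsto_measureReal {X ι : Type*} [MeasurableSpace X]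
    {μ : Measure X} [IsProbabilityMeasure μ] {l : Filter ι} {s : ι → Set X}
    (hs : ∀ i, MeasurableSet (s i)) (h : Tendsto (fun i => μ.real (s i)) l (𝓝 0)) :
    Tendsto (fun i => μ (s i)ᶜ) l (𝓝 1) := by
  rw [← ENNReal.tendsto_toReal_iff (fun _ => measure_ne_top μ _) ENNReal.one_ne_top]
  have := (tendsto_const_nhds (x := (1 : ℝ))).sub h
  simp only [sub_zero] at this
  refine this.congr fun i => ?_
  rw [← probReal_compl_eq_one_sub (hs i), measureReal_def]

theorem stmt_3_general {X : Type*} [MetricSpace X] [CompactSpace X]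
    [MeasurableSpace X] [BorelSpace X]
    (f : X → X)
    (μ : Measure X) [IsProbabilityMeasure μ] (hinv : MeasurePreserving f μ μ)
    (φ : ℕ → X → ℝ) (hcont : ∀ n, Continuous (φ n))
    (hsub : ∀ n m x, φ (n + m) x ≤ φ n x + φ m (f^[n] x))
    (γ₁ γ₂ : ℝ) (hγ : γ₁ < γ₂)
    (hlim : ∀ᵐ x ∂μ, limsup (fun n => φ n x / n) atTop ≤ γ₁) :
    Tendsto (fun ℓ : ℕ => μ {x | ∀ n : ℕ, 1 ≤ n →
        (∑ i ∈ Finset.range n, φ ℓ (f^[i * ℓ] x)) / (n * ℓ : ℝ) ≤ γ₂})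
      atTop (𝓝 1) := by
  obtain ⟨γ, hγ₁, hγ₂⟩ := exists_between hγ
  obtain ⟨C, hC⟩ := (isCompact_range (hcont 1)).bddAbove
  set B := fun ℓ : ℕ => {x | ∃ n, 0 < birkhoffSum (f^[ℓ]) (fun y => φ ℓ y / ℓ - γ₂) n x}
  have hmeas : ∀ ℓ, Measurable fun x => φ ℓ x / ℓ := fun ℓ => (hcont ℓ).measurable.div_const _
  have hI : Tendsto (fun ℓ : ℕ => ∫ x, max (φ ℓ x / ℓ - γ) 0 ∂μ) atTop (𝓝 0) :=
    tendsto_integral_max_sub_zero_of_limsup_lt hmeas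
      ((eventually_ge_atTop 1).mono fun ℓ hℓ x =>
        div_le_of_subadditive hsub (fun y => hC ⟨y, rfl⟩) hℓ x)
      (hlim.mono fun x hx => hx.trans_lt hγ₁)
  have hB : ∀ ℓ, μ.real (B ℓ) ≤ (∫ x, max (φ ℓ x / ℓ - γ) 0 ∂μ) / (γ₂ - γ) := fun ℓ => by
    rw [le_div_iff₀ (sub_pos.2 hγ₂), mul_comm]
    exact (hinv.iterate ℓ).mul_measureReal_exists_birkhoffSum_pos_le (hmeas ℓ)
      (((hcont ℓ).div_const _).integrable_of_hasCompactSupport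
        (HasCompactSupport.of_compactSpace _)) γ γ₂
  have hB0 : Tendsto (fun ℓ => μ.real (B ℓ)) atTop (𝓝 0) :=
    squeeze_zero (fun _ => measureReal_nonneg) hB (by simpa using hI.div_const (γ₂ - γ))
  refine (tendsto_measure_compl_of_tendsto_measureReal (fun ℓ =>
    measurableSet_exists_birkhoffSum_pos (hinv.measurable.iterate ℓ)
      ((hmeas ℓ).sub_const γ₂)) hB0).congr' ?_
  filter_upwards [eventually_ge_atTop 1] with ℓ hℓ
  rw [setOf_forall_sum_div_le_eq_compl hℓ]

/-- Lemma 3.7 of the paper: for a sub-additive sequence of continuous functions with a.e.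
asymptotic rate at most `γ₁ < γ₂`, the measure of the block
`H_ℓ(Φ, γ₂) = {x : (1/(nℓ)) ∑_{i<n} φ_ℓ(f^{iℓ} x) ≤ γ₂, ∀ n ≥ 1}` tends to `1` as `ℓ → ∞`. -/
theorem stmt_3 {X : Type*} [MetricSpace X] [CompactSpace X]
    [MeasurableSpace X] [BorelSpace X]
    (f : X → X) (hf : Measurable f)
    (μ : Measure X) [IsProbabilityMeasure μ] (hinv : MeasurePreserving f μ μ)
    (φ : ℕ → X → ℝ) (hcont : ∀ n, Continuous (φ n))
    (hsub : ∀ n m x, φ (n + m) x ≤ φ n x + φ m (f^[n] x))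
    (γ₁ γ₂ : ℝ) (hγ : γ₁ < γ₂)
    (hlim : ∀ᵐ x ∂μ, limsup (fun n => φ n x / n) atTop ≤ γ₁) :
    Tendsto (fun ℓ : ℕ => μ {x | ∀ n : ℕ, 1 ≤ n →
        (∑ i ∈ Finset.range n, φ ℓ (f^[i * ℓ] x)) / (n * ℓ : ℝ) ≤ γ₂})
      atTop (𝓝 1) :=
  stmt_3_general f μ hinv φ hcont hsub γ₁ γ₂ hγ hlim
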